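/- arXiv:2106.04251 — 2 statements merged into one kernel-verified Lean document; each statement's English description precedes it below -/
import Mathlib

section
/- Let Φ : ℝ≥0 × ℝⁿ → ℝⁿ be a flow (Φ(0,x) = x and Φ(s+t, x) = Φ(s, Φ(t,x))). If for each t ≥ 0 and each x₀ there is a set B(t) ⊆ ℝⁿ with Φ(t, B(0)) ⊆ B(t) for all t, and there exist T > 0 and i ∈ ℕ with B((i+1)T) ⊆ B(iT), then the set K = ⋃_{t ∈ [0,(i+1)T]} B(t) satisfies: for every y₀ ∈ B(0) and every t ≥ 0, Φ(t, y₀) ∈ K. -/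
theorem stmt8 (n : ℕ) (Φ : ℝ → EuclideanSpace ℝ (Fin n) → EuclideanSpace ℝ (Fin n))
    (hΦ0 : ∀ x, Φ 0 x = x)
    (hΦadd : ∀ s t : ℝ, 0 ≤ s → 0 ≤ t → ∀ x, Φ (s + t) x = Φ s (Φ t x))
    (B : ℝ → Set (EuclideanSpace ℝ (Fin n)))
    (hreach : ∀ t : ℝ, 0 ≤ t → ∀ y ∈ B 0, Φ t y ∈ B t)
    (hcompat : ∀ s t : ℝ, 0 ≤ s → 0 ≤ t → ∀ y ∈ B t, Φ s y ∈ B (t + s))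
    (T : ℝ) (hT : 0 < T) (i : ℕ)
    (hincl : B ((i + 1 : ℕ) * T) ⊆ B ((i : ℕ) * T)) :
    ∀ y₀ ∈ B 0, ∀ t : ℝ, 0 ≤ t →
      Φ t y₀ ∈ ⋃ s ∈ Set.Icc (0:ℝ) ((i + 1 : ℕ) * T), B s := by
  intro y₀ hy₀ t ht
  set a : ℝ := (i : ℕ) * T with ha
  have ha0 : 0 ≤ a := by positivity
  have haT : ((i + 1 : ℕ) : ℝ) * T = a + T := by push_cast; ring
  -- Key claim: for all k, Φ (a + k*T) y₀ ∈ B a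
  have key : ∀ k : ℕ, Φ (a + k * T) y₀ ∈ B a := by
    intro k
    induction k with
    | zero =>
      simpa using hreach a ha0 y₀ hy₀
    | succ k ih =>
      have h1 : a + (k + 1 : ℕ) * T = T + (a + k * T) := by push_cast; ring
      rw [h1, hΦadd T (a + k * T) hT.le (by positivity) y₀]
      have := hcompat T a hT.le ha0 _ ih
      rw [haT] at hincl
      exact hincl this
  by_cases hle : t ≤ a + T
  · -- direct: Φ t y₀ ∈ B t
    refine Set.mem_biUnion ?_ (hreach t ht y₀ hy₀)
    rw [haT]; exact ⟨ht, hle⟩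
  · push_neg at hle
    -- t > a + T; take k = ⌊(t - a)/T⌋
    have hta : 0 < t - a := by linarith
    set k : ℕ := ⌊(t - a) / T⌋.toNat with hk
    have hk1 : 1 ≤ ⌊(t - a) / T⌋ := by
      rw [Int.le_floor]
      push_cast
      rw [le_div_iff₀ hT]
      linarith
    have hkcast : (k : ℝ) = (⌊(t - a) / T⌋ : ℤ) := by
      have h := Int.toNat_of_nonneg (show (0:ℤ) ≤ ⌊(t - a) / T⌋ by linarith)
      rw [hk]
      exact_mod_cast congrArg (Int.cast : ℤ → ℝ) h
    have hfloor_le : (k : ℝ) * T ≤ t - a := by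
      rw [hkcast]
      calc (⌊(t - a) / T⌋ : ℝ) * T ≤ (t - a) / T * T :=
        mul_le_mul_of_nonneg_right (Int.floor_le _) hT.le
      _ = t - a := div_mul_cancel₀ _ hT.ne'
    have hlt_floor : t - a < (k : ℝ) * T + T := by
      rw [hkcast]
      have := Int.lt_floor_add_one ((t - a) / T)
      calc t - a = (t - a) / T * T := (div_mul_cancel₀ _ hT.ne').symm
      _ < ((⌊(t - a) / T⌋ : ℝ) + 1) * T := by
          apply mul_lt_mul_of_pos_right this hT
      _ = (⌊(t - a) / T⌋ : ℝ) * T + T := by ring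
    set r : ℝ := t - a - k * T with hr
    have hr0 : 0 ≤ r := by simp only [hr]; linarith
    have hrT : r < T := by simp only [hr]; linarith
    have hsplit : t = r + (a + k * T) := by simp only [hr]; ring
    have hakT : (0:ℝ) ≤ a + k * T := by positivity
    rw [hsplit, hΦadd r (a + k * T) hr0 hakT y₀]
    have hmem := hcompat r a hr0 ha0 _ (key k)
    refine Set.mem_biUnion ?_ hmem
    rw [haT]
    constructor <;> [positivity; linarith]
end

section
/- Suppose f satisfies the uncertain one-sided Lipschitz condition (H1): ⟨f(y₁,w₁) − f(y₂,w₂), y₁ − y₂⟩ ≤ λ‖y₁−y₂‖² + γ‖y₁−y₂‖·‖w₁−w₂‖ for all y₁,y₂ and w₁,w₂ ∈ W, with λ < 0 and γ ≥ 0. Let x(·) solve ẋ = f(x, w(t)) with w(t) ∈ W and y(·) solve ẏ = f(y, 0), 0 ∈ W. Then for all t ≥ 0, ‖x(t) − y(t)‖ ≤ e^{λt}‖x(0) − y(0)‖ + (γ·|W|/(−λ))·(1 − e^{λt}), where |W| is the diameter of W. -/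
/-!
Put `u = x - y`. By (H1) with `w₁ = w(t)`, `w₂ = 0`, the error satisfies the one-sided bound
`⟪u, u'⟫ ≤ λ‖u‖² + γ|W|‖u‖`, so `‖u‖` is formally a subsolution of `r' = λr + γ|W|`, and
Grönwall's inequality gives the claim. Since `‖u‖` need not be differentiable where `u`
vanishes, one runs the argument on the smooth `√(‖u‖² + ε)` instead, at the cost of an
extra forcing term `|λ|√ε`, and lets `ε → 0`.
-/

open RealInnerProductSpace Set Filter Topology

theorem gronwallBound_continuous_δ_ε (K x : ℝ) :
    Continuous fun p : ℝ × ℝ => gronwallBound p.1 K p.2 x := by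
  by_cases hK : K = 0
  · simp only [gronwallBound_K0, hK]
    fun_prop
  · simp only [gronwallBound_of_K_ne_0 hK]
    fun_prop

theorem div_sqrt_sq_add_le {K c r ε p : ℝ} (hc : 0 ≤ c) (hε : 0 < ε)
    (hp : p ≤ K * r ^ 2 + c * r) :
    p / √(r ^ 2 + ε) ≤ K * √(r ^ 2 + ε) + (c + |K| * √ε) := by
  set ψ := √(r ^ 2 + ε)
  have hψ : 0 < ψ := Real.sqrt_pos.2 (by positivity)
  have hψ_sq : ψ ^ 2 = r ^ 2 + ε := Real.sq_sqrt (by positivity)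
  have hr_le : r ≤ ψ := Real.le_sqrt_of_sq_le (by linarith)
  have hε_le : √ε ≤ ψ := Real.sqrt_le_sqrt (by nlinarith)
  have hε_sq : √ε * √ε = ε := Real.mul_self_sqrt hε.le
  -- `|K| √ε ψ ≥ |K| ε ≥ -K ε` absorbs the error `K (ψ² - r²) = K ε`.
  have h_abs : -(K * ε) ≤ |K| * √ε * ψ :=
    calc -(K * ε) ≤ |K| * ε := by nlinarith [neg_abs_le K]
      _ = |K| * √ε * √ε := by rw [mul_assoc, hε_sq]
      _ ≤ |K| * √ε * ψ := by gcongr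
  rw [div_le_iff₀ hψ]
  calc p ≤ K * r ^ 2 + c * r := hp
    _ ≤ K * r ^ 2 + c * ψ := by gcongr
    _ ≤ K * ψ ^ 2 + c * ψ + |K| * √ε * ψ := by rw [hψ_sq]; linarith
    _ = (K * ψ + (c + |K| * √ε)) * ψ := by ring

section

variable {E : Type*} [NormedAddCommGroup E] [InnerProductSpace ℝ E]

theorem HasDerivWithinAt.sqrt_norm_sq_add {u : ℝ → E} {u' : E} {s : Set ℝ} {x ε : ℝ}
    (hu : HasDerivWithinAt u u' s x) (hε : 0 < ε) :
    HasDerivWithinAt (fun y => √(‖u y‖ ^ 2 + ε)) (⟪u x, u'⟫ / √(‖u x‖ ^ 2 + ε)) s x := by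
  convert (hu.norm_sq.add_const ε).sqrt (by positivity) using 1
  rw [mul_div_mul_left _ _ two_ne_zero]

variable {u v : ℝ → E} {K c a b : ℝ}

theorem sqrt_norm_sq_add_le_gronwallBound_of_inner_deriv_right_le
    (hu : ContinuousOn u (Icc a b)) (hu' : ∀ s ∈ Ico a b, HasDerivWithinAt u (v s) (Ici s) s)
    (hc : 0 ≤ c) (bound : ∀ s ∈ Ico a b, ⟪u s, v s⟫ ≤ K * ‖u s‖ ^ 2 + c * ‖u s‖)
    {ε : ℝ} (hε : 0 < ε) :
    ∀ t ∈ Icc a b, √(‖u t‖ ^ 2 + ε) ≤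
      gronwallBound √(‖u a‖ ^ 2 + ε) K (c + |K| * √ε) (t - a) :=
  le_gronwallBound_of_liminf_deriv_right_le
    (((hu.norm.pow 2).add continuousOn_const).sqrt)
    (fun s hs _ hr => ((hu' s hs).sqrt_norm_sq_add hε).liminf_right_slope_le hr) le_rfl
    (fun s hs => div_sqrt_sq_add_le hc hε (bound s hs))

theorem norm_le_gronwallBound_of_inner_deriv_right_le
    (hu : ContinuousOn u (Icc a b)) (hu' : ∀ s ∈ Ico a b, HasDerivWithinAt u (v s) (Ici s) s)
    (hc : 0 ≤ c) (bound : ∀ s ∈ Ico a b, ⟪u s, v s⟫ ≤ K * ‖u s‖ ^ 2 + c * ‖u s‖) :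
    ∀ t ∈ Icc a b, ‖u t‖ ≤ gronwallBound ‖u a‖ K c (t - a) := by
  intro t ht
  set g : ℝ → ℝ := fun ε => gronwallBound √(‖u a‖ ^ 2 + ε) K (c + |K| * √ε) (t - a)
  have hg : Continuous g :=
    (gronwallBound_continuous_δ_ε K (t - a)).comp (by fun_prop : Continuous fun ε : ℝ =>
      (√(‖u a‖ ^ 2 + ε), c + |K| * √ε))
  have hg0 : g 0 = gronwallBound ‖u a‖ K c (t - a) := by
    simp [g, Real.sqrt_sq (norm_nonneg _)]
  rw [← hg0]
  refine ge_of_tendsto (hg.continuousAt.continuousWithinAt (s := Ioi 0)) ?_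
  filter_upwards [self_mem_nhdsWithin] with ε (hε : 0 < ε)
  calc ‖u t‖ ≤ √(‖u t‖ ^ 2 + ε) := Real.le_sqrt_of_sq_le (by linarith)
    _ ≤ g ε := sqrt_norm_sq_add_le_gronwallBound_of_inner_deriv_right_le hu hu' hc bound hε t ht

end

theorem stmt12 (n m : ℕ)
    (f : EuclideanSpace ℝ (Fin n) → EuclideanSpace ℝ (Fin m) → EuclideanSpace ℝ (Fin n))
    (W : Set (EuclideanSpace ℝ (Fin m))) (hWc : IsCompact W) (hW0 : (0 : EuclideanSpace ℝ (Fin m)) ∈ W)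
    (lam γ : ℝ) (hlam : lam < 0) (hγ : 0 ≤ γ)
    (hH1 : ∀ y₁ y₂ : EuclideanSpace ℝ (Fin n), ∀ w₁ ∈ W, ∀ w₂ ∈ W,
      ⟪f y₁ w₁ - f y₂ w₂, y₁ - y₂⟫ ≤ lam * ‖y₁ - y₂‖^2 + γ * ‖y₁ - y₂‖ * ‖w₁ - w₂‖)
    (w : ℝ → EuclideanSpace ℝ (Fin m)) (hw : ∀ t : ℝ, 0 ≤ t → w t ∈ W)
    (x y : ℝ → EuclideanSpace ℝ (Fin n))
    (hx : ∀ t : ℝ, 0 ≤ t → HasDerivAt x (f (x t) (w t)) t)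
    (hy : ∀ t : ℝ, 0 ≤ t → HasDerivAt y (f (y t) 0) t) :
    ∀ t : ℝ, 0 ≤ t →
      ‖x t - y t‖ ≤ Real.exp (lam * t) * ‖x 0 - y 0‖ +
        (γ * Metric.diam W / (-lam)) * (1 - Real.exp (lam * t)) := by
  intro t ht
  have hxy : ∀ s, 0 ≤ s → HasDerivAt (fun r => x r - y r) (f (x s) (w s) - f (y s) 0) s :=
    fun s hs => (hx s hs).sub (hy s hs)
  have bound : ∀ s ∈ Ico 0 t, ⟪x s - y s, f (x s) (w s) - f (y s) 0⟫ ≤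
      lam * ‖x s - y s‖ ^ 2 + γ * Metric.diam W * ‖x s - y s‖ := by
    intro s hs
    have hw_le : ‖w s - 0‖ ≤ Metric.diam W := by
      simpa [dist_eq_norm] using Metric.dist_le_diam_of_mem hWc.isBounded (hw s hs.1) hW0
    rw [real_inner_comm]
    nlinarith [hH1 (x s) (y s) (w s) (hw s hs.1) 0 hW0,
      mul_le_mul_of_nonneg_left hw_le (mul_nonneg hγ (norm_nonneg (x s - y s)))]
  have := norm_le_gronwallBound_of_inner_deriv_right_le
    (fun s hs => (hxy s hs.1).continuousAt.continuousWithinAt)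
    (fun s hs => (hxy s hs.1).hasDerivWithinAt) (mul_nonneg hγ Metric.diam_nonneg) bound
    t ⟨ht, le_rfl⟩
  rw [gronwallBound_of_K_ne_0 hlam.ne, sub_zero] at this
  convert this using 2
  field_simp
  ring
end
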